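/- arXiv:1603.08402 — 6 statements merged into one kernel-verified Lean document; each statement's English description precedes it below -/
import Mathlib

section
/- Let β > 1 be a real number and let Σ_β^n denote the set of admissible words of length n for the β-expansion (i.e., finite digit strings arising as initial digit blocks of β-expansions of points in [0,1)). Then for every n ≥ 1, β^n ≤ #Σ_β^n ≤ β^{n+1}/(β−1). -/
open Filter Real MeasureTheory Set

/-- The β-transformation T_β(x) = βx - ⌊βx⌋. -/
noncomputable def bT (β x : ℝ) : ℝ := β * x - ⌊β * x⌋

/-- The k-th digit (0-based: `bDigit β x k = ε_{k+1}(x)`) of the β-expansion. -/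
noncomputable def bDigit (β x : ℝ) (k : ℕ) : ℤ := ⌊β * ((bT β)^[k] x)⌋

/-- The n-th convergent ω_n(x) = Σ_{k=1}^n ε_k(x)/β^k. -/
noncomputable def bConv (β x : ℝ) (n : ℕ) : ℝ :=
  ∑ k ∈ Finset.range n, (bDigit β x k : ℝ) / β ^ (k + 1)

/-- ℓ_n(x): length of the longest run of zero digits just after the n-th digit. -/
noncomputable def ellRun (β x : ℝ) (n : ℕ) : ℕ :=
  sSup {k : ℕ | ∀ j < k, bDigit β x (n + j) = 0}

/-- r_n(x): maximal length of a run of zeros within the first n digits. -/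
noncomputable def runMax (β x : ℝ) (n : ℕ) : ℕ :=
  sSup {k : ℕ | ∃ i, i + k ≤ n ∧ ∀ j < k, bDigit β x (i + j) = 0}

/-!
The cylinders of the admissible words of length `n` partition `[0, 1)`, and the cylinder of `w`
lies in the interval of length `β ^ (-n)` starting at `∑ wᵢ β ^ (-i)`; comparing Lebesgue measures
gives `β ^ n ≤ #Σ_β^n`.

Call a word of length `n + 1` full when its last digit can still be increased after the same
prefix. The cylinder of a full word contains the whole interval of length `β ^ (-(n + 1))` starting
at its value, so disjointness bounds the number of full words by `β ^ (n + 1)`; a word that is not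
full is determined by its prefix. Hence `#Σ_β^(n+1) ≤ β ^ (n + 1) + #Σ_β^n`, and summing the
geometric series gives `#Σ_β^n ≤ (β ^ (n + 1) - 1) / (β - 1)`.
-/

section Dynamics

variable {β : ℝ}

theorem bT_mem_Ico (β x : ℝ) : bT β x ∈ Ico (0 : ℝ) 1 :=
  ⟨Int.fract_nonneg (β * x), Int.fract_lt_one (β * x)⟩

theorem iterate_bT_mem_Ico {x : ℝ} (hx : x ∈ Ico (0 : ℝ) 1) :
    ∀ k, (bT β)^[k] x ∈ Ico (0 : ℝ) 1
  | 0 => hx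
  | k + 1 => by rw [Function.iterate_succ_apply']; exact bT_mem_Ico β _

theorem bDigit_succ (β x : ℝ) (k : ℕ) : bDigit β x (k + 1) = bDigit β (bT β x) k := by
  rw [bDigit, bDigit, Function.iterate_succ_apply]

theorem bDigit_nonneg (hβ : 0 ≤ β) {x : ℝ} (hx : x ∈ Ico (0 : ℝ) 1) (k : ℕ) :
    0 ≤ bDigit β x k :=
  Int.floor_nonneg.2 (mul_nonneg hβ (iterate_bT_mem_Ico hx k).1)

theorem bDigit_le_floor (hβ : 0 ≤ β) {x : ℝ} (hx : x ∈ Ico (0 : ℝ) 1) (k : ℕ) :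
    bDigit β x k ≤ ⌊β⌋ :=
  Int.floor_mono (mul_le_of_le_one_right hβ (iterate_bT_mem_Ico hx k).2.le)

theorem bConv_zero (β x : ℝ) : bConv β x 0 = 0 := by
  simp [bConv]

theorem bConv_succ (β x : ℝ) (n : ℕ) :
    bConv β x (n + 1) = (bDigit β x 0 + bConv β (bT β x) n) / β := by
  simp only [bConv, Finset.sum_range_succ', bDigit_succ, add_div, Finset.sum_div, pow_succ, div_div]
  ring

theorem bConv_add_iterate_div (hβ : β ≠ 0) (x : ℝ) (n : ℕ) :
    bConv β x n + (bT β)^[n] x / β ^ n = x := by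
  induction n generalizing x with
  | zero => simp [bConv_zero]
  | succ m ih =>
    have hT : bT β x = β * x - bDigit β x 0 := rfl
    rw [bConv_succ, Function.iterate_succ_apply, pow_succ, ← div_div, ← add_div, add_assoc,
      ih, hT]
    field_simp
    ring

theorem bDigit_eq_of_mem_Icc (hβ : 0 < β) {n : ℕ} {x z : ℝ} (hx : x ∈ Ico (0 : ℝ) 1)
    (hz : z ∈ Icc (bConv β x n) x) :
    z ∈ Ico (0 : ℝ) 1 ∧ (∀ k < n, bDigit β z k = bDigit β x k) ∧
      (bT β)^[n] z = (z - bConv β x n) * β ^ n := by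
  induction n generalizing x z with
  | zero =>
    rw [bConv_zero] at hz ⊢
    exact ⟨⟨hz.1, hz.2.trans_lt hx.2⟩, by simp, by simp⟩
  | succ m ih =>
    set d : ℤ := bDigit β x 0
    have hTx : bT β x = β * x - d := rfl
    obtain ⟨hz₀, hzx⟩ := hz
    rw [bConv_succ, div_le_iff₀ hβ] at hz₀
    obtain ⟨hz'mem, hz'digits, hz'iter⟩ :=
      ih (bT_mem_Ico β x) (z := β * z - d) ⟨by linarith, by nlinarith⟩
    have hfloor : ⌊β * z⌋ = d :=
      Int.floor_eq_iff.2 ⟨by linarith [hz'mem.1], by linarith [hz'mem.2]⟩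
    have hTz : bT β z = β * z - d := by rw [bT, hfloor]
    refine ⟨⟨?_, hzx.trans_lt hx.2⟩, fun k hk => ?_, ?_⟩
    · have hd : (0 : ℝ) ≤ d := by exact_mod_cast bDigit_nonneg hβ.le hx 0
      exact (mul_nonneg_iff_of_pos_left hβ).1 (by linarith [hz'mem.1])
    · cases k with
      | zero => exact hfloor
      | succ j => rw [bDigit_succ, bDigit_succ, hTz, hz'digits j (by omega)]
    · rw [Function.iterate_succ_apply, hTz, hz'iter, bConv_succ]
      field_simp
      ring

end Dynamics

section Counting

variable {ι : Type*} {s : Set ι} {a : ι → ℝ} {δ : ℝ}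

theorem one_le_ncard_mul_of_Ico_subset_biUnion (hs : s.Finite)
    (hcover : Ico (0 : ℝ) 1 ⊆ ⋃ i ∈ s, Ico (a i) (a i + δ)) : 1 ≤ s.ncard * δ := by
  obtain ⟨t, rfl⟩ := hs.exists_finset_coe
  rw [Set.ncard_coe_finset, ← ENNReal.one_le_ofReal, ENNReal.ofReal_mul (Nat.cast_nonneg _),
    ENNReal.ofReal_natCast]
  calc 1 = volume (Ico (0 : ℝ) 1) := by simp
    _ ≤ volume (⋃ i ∈ t, Ico (a i) (a i + δ)) := measure_mono hcover
    _ ≤ ∑ i ∈ t, volume (Ico (a i) (a i + δ)) := measure_biUnion_finset_le t _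
    _ = t.card * ENNReal.ofReal δ := by simp [Real.volume_Ico]

theorem ncard_mul_le_one_of_pairwiseDisjoint (hs : s.Finite)
    (hsub : ∀ i ∈ s, Ico (a i) (a i + δ) ⊆ Ico (0 : ℝ) 1)
    (hdisj : s.PairwiseDisjoint fun i => Ico (a i) (a i + δ)) : s.ncard * δ ≤ 1 := by
  obtain ⟨t, rfl⟩ := hs.exists_finset_coe
  rw [Set.ncard_coe_finset, ← ENNReal.ofReal_le_one, ENNReal.ofReal_mul (Nat.cast_nonneg _),
    ENNReal.ofReal_natCast]
  calc t.card * ENNReal.ofReal δ = ∑ i ∈ t, volume (Ico (a i) (a i + δ)) := by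
        simp [Real.volume_Ico]
    _ = volume (⋃ i ∈ t, Ico (a i) (a i + δ)) :=
        (measure_biUnion_finset hdisj fun _ _ => measurableSet_Ico).symm
    _ ≤ volume (Ico (0 : ℝ) 1) := measure_mono (iUnion₂_subset hsub)
    _ = 1 := by simp

end Counting

section Words

variable {β : ℝ} {n : ℕ}

def bCylinder (β : ℝ) {n : ℕ} (w : Fin n → ℤ) : Set ℝ :=
  {x ∈ Ico (0 : ℝ) 1 | ∀ i : Fin n, bDigit β x i = w i}

def admissibleWords (β : ℝ) (n : ℕ) : Set (Fin n → ℤ) :=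
  {w | (bCylinder β w).Nonempty}

noncomputable def wordValue (β : ℝ) {n : ℕ} (w : Fin n → ℤ) : ℝ :=
  ∑ i : Fin n, (w i : ℝ) / β ^ ((i : ℕ) + 1)

theorem pairwiseDisjoint_bCylinder (β : ℝ) (n : ℕ) :
    (univ : Set (Fin n → ℤ)).PairwiseDisjoint (bCylinder β) :=
  fun _ _ _ _ hne => Set.disjoint_left.2 fun _ hx hx' =>
    hne (funext fun i => (hx.2 i).symm.trans (hx'.2 i))

theorem admissibleWords_finite (hβ : 0 ≤ β) (n : ℕ) : (admissibleWords β n).Finite := by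
  refine (Set.Finite.pi fun _ => Set.finite_Icc (0 : ℤ) ⌊β⌋).subset ?_
  rintro w ⟨x, hx, hxw⟩ i -
  rw [← hxw i]
  exact ⟨bDigit_nonneg hβ hx i, bDigit_le_floor hβ hx i⟩

theorem admissibleWords_zero (β : ℝ) : admissibleWords β 0 = univ :=
  eq_univ_of_forall fun _ => ⟨0, ⟨le_rfl, one_pos⟩, fun i => i.elim0⟩

theorem init_mem_admissibleWords {w : Fin (n + 1) → ℤ} (hw : w ∈ admissibleWords β (n + 1)) :
    Fin.init w ∈ admissibleWords β n :=
  let ⟨x, hx, hxw⟩ := hw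
  ⟨x, hx, fun i => hxw i.castSucc⟩

theorem wordValue_eq_bConv {w : Fin n → ℤ} {x : ℝ} (hx : x ∈ bCylinder β w) :
    wordValue β w = bConv β x n := by
  rw [wordValue, bConv, ← Fin.sum_univ_eq_sum_range (fun k => (bDigit β x k : ℝ) / β ^ (k + 1))]
  exact Finset.sum_congr rfl fun i _ => by rw [hx.2 i]

theorem wordValue_eq_init_add (w : Fin (n + 1) → ℤ) :
    wordValue β w = wordValue β (Fin.init w) + w (Fin.last n) / β ^ (n + 1) := by
  rw [wordValue, Fin.sum_univ_castSucc]
  rfl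

theorem bCylinder_subset_Ico_wordValue (hβ : 0 < β) (w : Fin n → ℤ) :
    bCylinder β w ⊆ Ico (wordValue β w) (wordValue β w + (β ^ n)⁻¹) := by
  intro x hx
  have hT := iterate_bT_mem_Ico (β := β) hx.1 n
  have hpow := pow_pos hβ n
  have hx' := bConv_add_iterate_div hβ.ne' x n
  have hTdiv : (bT β)^[n] x / β ^ n < (β ^ n)⁻¹ := by
    rw [← one_div]
    exact div_lt_div_of_pos_right hT.2 hpow
  rw [wordValue_eq_bConv hx]
  constructor <;> linarith [div_nonneg hT.1 hpow.le]

end Words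

section FullWords

variable {β : ℝ} {n : ℕ}

def fullWords (β : ℝ) (n : ℕ) : Set (Fin (n + 1) → ℤ) :=
  {w ∈ admissibleWords β (n + 1) |
    ∃ x ∈ bCylinder β (Fin.init w), w (Fin.last n) < bDigit β x n}

theorem fullWords_subset (β : ℝ) (n : ℕ) : fullWords β n ⊆ admissibleWords β (n + 1) :=
  fun _ hw => hw.1

theorem Ico_wordValue_subset_bCylinder (hβ : 0 < β) {w : Fin (n + 1) → ℤ}
    (hw : w ∈ fullWords β n) :
    Ico (wordValue β w) (wordValue β w + (β ^ (n + 1))⁻¹) ⊆ bCylinder β w := by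
  obtain ⟨⟨y, hy, hyw⟩, x, hx, hlast⟩ := hw
  set d := w (Fin.last n)
  have hd : (0 : ℝ) ≤ d := by exact_mod_cast hyw (Fin.last n) ▸ bDigit_nonneg hβ.le hy n
  have hd₁ : (d : ℝ) + 1 ≤ β * (bT β)^[n] x := by
    have : d + 1 ≤ bDigit β x n := hlast
    exact le_trans (by exact_mod_cast this) (Int.floor_le _)
  have hpow := pow_pos hβ (n + 1)
  rw [wordValue_eq_init_add, wordValue_eq_bConv hx]
  rintro z ⟨hz₀, hz₁⟩
  set C := bConv β x n
  have hβv : β * ((z - C) * β ^ n) = (z - C) * β ^ (n + 1) := by ring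
  have hv : d ≤ β * ((z - C) * β ^ n) ∧ β * ((z - C) * β ^ n) < d + 1 := by
    rw [hβv, ← div_le_iff₀ hpow, ← lt_div_iff₀ hpow, add_div, one_div]
    constructor <;> linarith
  have hzx : z - C < (bT β)^[n] x / β ^ n :=
    (lt_div_iff₀ (pow_pos hβ n)).2 (lt_of_mul_lt_mul_left (hv.2.trans_le hd₁) hβ.le)
  have hzC : C ≤ z := by linarith [div_nonneg hd hpow.le]
  obtain ⟨hzmem, hzdigits, hziter⟩ := bDigit_eq_of_mem_Icc hβ hx.1
    ⟨hzC, by linarith [bConv_add_iterate_div hβ.ne' x n]⟩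
  refine ⟨hzmem, Fin.lastCases ?_ fun i => ?_⟩
  · show ⌊β * (bT β)^[n] z⌋ = d
    rw [hziter, Int.floor_eq_iff]
    exact hv
  · rw [Fin.val_castSucc, hzdigits i i.isLt, hx.2 i]
    rfl

theorem mem_fullWords_of_lt {w w' : Fin (n + 1) → ℤ} (hw : w ∈ admissibleWords β (n + 1))
    (hw' : w' ∈ admissibleWords β (n + 1)) (hinit : Fin.init w = Fin.init w')
    (hlt : w (Fin.last n) < w' (Fin.last n)) : w ∈ fullWords β n := by
  obtain ⟨x, hx, hxw⟩ := hw'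
  exact ⟨hw, x, ⟨hx, fun i => by rw [hinit]; exact hxw i.castSucc⟩,
    hlt.trans_eq (hxw _).symm⟩

theorem injOn_init_diff_fullWords :
    InjOn Fin.init (admissibleWords β (n + 1) \ fullWords β n) := by
  rintro w ⟨hw, hwf⟩ w' ⟨hw', hw'f⟩ hinit
  rw [← Fin.snoc_init_self w, ← Fin.snoc_init_self w', hinit]
  congr 1
  by_contra hne
  rcases lt_or_gt_of_ne hne with hlt | hlt
  · exact hwf (mem_fullWords_of_lt hw hw' hinit hlt)
  · exact hw'f (mem_fullWords_of_lt hw' hw hinit.symm hlt)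

theorem ncard_fullWords_le (hβ : 0 < β) (n : ℕ) :
    ((fullWords β n).ncard : ℝ) ≤ β ^ (n + 1) := by
  have hfin := (admissibleWords_finite hβ.le (n + 1)).subset (fullWords_subset β n)
  have hdisj :=
    ((pairwiseDisjoint_bCylinder β (n + 1)).subset (subset_univ (fullWords β n))).mono_on
      fun _ hw => Ico_wordValue_subset_bCylinder hβ hw
  have := ncard_mul_le_one_of_pairwiseDisjoint hfin
    (fun _ hw => (Ico_wordValue_subset_bCylinder hβ hw).trans fun _ hz => hz.1) hdisj
  rwa [mul_inv_le_iff₀ (pow_pos hβ _), one_mul] at this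

end FullWords

section Bounds

variable {β : ℝ}

theorem pow_le_ncard_admissibleWords (hβ : 0 < β) (n : ℕ) :
    β ^ n ≤ (admissibleWords β n).ncard := by
  have hcover : Ico (0 : ℝ) 1 ⊆
      ⋃ w ∈ admissibleWords β n, Ico (wordValue β w) (wordValue β w + (β ^ n)⁻¹) := by
    intro x hx
    have hxw : x ∈ bCylinder β (fun i : Fin n => bDigit β x i) := ⟨hx, fun _ => rfl⟩
    exact mem_biUnion ⟨x, hxw⟩ (bCylinder_subset_Ico_wordValue hβ _ hxw)
  have := one_le_ncard_mul_of_Ico_subset_biUnion (admissibleWords_finite hβ.le n) hcover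
  rwa [le_mul_inv_iff₀ (pow_pos hβ n), one_mul] at this

theorem ncard_admissibleWords_succ_le (hβ : 0 < β) (n : ℕ) :
    ((admissibleWords β (n + 1)).ncard : ℝ) ≤ β ^ (n + 1) + (admissibleWords β n).ncard := by
  have hsplit := Set.ncard_union_le (fullWords β n) (admissibleWords β (n + 1) \ fullWords β n)
  rw [Set.union_sdiff_cancel (fullWords_subset β n)] at hsplit
  have hnonfull := Set.ncard_le_ncard_of_injOn Fin.init (fun _ hw => init_mem_admissibleWords hw.1)
    injOn_init_diff_fullWords (admissibleWords_finite hβ.le n)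
  have hfull := ncard_fullWords_le hβ n
  have : ((admissibleWords β (n + 1)).ncard : ℝ) ≤
      (fullWords β n).ncard + (admissibleWords β n).ncard := by
    exact_mod_cast hsplit.trans (Nat.add_le_add_left hnonfull _)
  linarith

theorem ncard_admissibleWords_le_geom_sum (hβ : 0 < β) :
    ∀ n, ((admissibleWords β n).ncard : ℝ) ≤ ∑ k ∈ Finset.range (n + 1), β ^ k
  | 0 => by simp [admissibleWords_zero]
  | n + 1 => by
    rw [Finset.sum_range_succ]
    linarith [ncard_admissibleWords_succ_le hβ n, ncard_admissibleWords_le_geom_sum hβ n]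

end Bounds

theorem stmt0_general (β : ℝ) (hβ : 1 < β) (n : ℕ) :
    β ^ n ≤ (Nat.card {w : Fin n → ℤ |
        ∃ x ∈ Set.Ico (0:ℝ) 1, ∀ i : Fin n, bDigit β x i = w i} : ℝ) ∧
    (Nat.card {w : Fin n → ℤ |
        ∃ x ∈ Set.Ico (0:ℝ) 1, ∀ i : Fin n, bDigit β x i = w i} : ℝ) ≤
      β ^ (n + 1) / (β - 1) := by
  have hβ₀ : 0 < β := zero_lt_one.trans hβ
  change β ^ n ≤ (Nat.card (admissibleWords β n) : ℝ) ∧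
    (Nat.card (admissibleWords β n) : ℝ) ≤ β ^ (n + 1) / (β - 1)
  rw [Nat.card_coe_set_eq]
  refine ⟨pow_le_ncard_admissibleWords hβ₀ n, ?_⟩
  calc ((admissibleWords β n).ncard : ℝ) ≤ ∑ k ∈ Finset.range (n + 1), β ^ k :=
        ncard_admissibleWords_le_geom_sum hβ₀ n
    _ = (β ^ (n + 1) - 1) / (β - 1) := geom_sum_eq hβ.ne' _
    _ ≤ β ^ (n + 1) / (β - 1) := by gcongr; linarith

theorem stmt0 (β : ℝ) (hβ : 1 < β) (n : ℕ) (hn : 1 ≤ n) :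
    β ^ n ≤ (Nat.card {w : Fin n → ℤ |
        ∃ x ∈ Set.Ico (0:ℝ) 1, ∀ i : Fin n, bDigit β x i = w i} : ℝ) ∧
    (Nat.card {w : Fin n → ℤ |
        ∃ x ∈ Set.Ico (0:ℝ) 1, ∀ i : Fin n, bDigit β x i = w i} : ℝ) ≤
      β ^ (n + 1) / (β - 1) :=
  stmt0_general β hβ n
end

section
/- Let β > 1 and x ∈ [0,1). Let ω_n(x) = Σ_{k=1}^n ε_k(x)/β^k be the n-th convergent of the β-expansion of x, and let ℓ_n(x) = sup{k ≥ 0 : ε_{n+1}(x) = ⋯ = ε_{n+k}(x) = 0} be the length of the longest run of zeros immediately after the n-th digit. If ℓ_n(x) < ∞, then β^{−(n+ℓ_n(x)+1)} ≤ x − ω_n(x) ≤ β^{−(n+ℓ_n(x))}. -/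
open Filter Real MeasureTheory Set

lemma bT_mem (β y : ℝ) : bT β y ∈ Set.Ico (0:ℝ) 1 := by
  have : bT β y = Int.fract (β * y) := rfl
  rw [this]
  exact ⟨Int.fract_nonneg _, Int.fract_lt_one _⟩

lemma bT_iter_mem (β x : ℝ) (hx : x ∈ Set.Ico (0:ℝ) 1) (k : ℕ) :
    (bT β)^[k] x ∈ Set.Ico (0:ℝ) 1 := by
  cases k with
  | zero => simpa using hx
  | succ m => rw [Function.iterate_succ_apply']; exact bT_mem _ _

lemma bConv_key (β x : ℝ) (hβ : 0 < β) (n : ℕ) :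
    x - bConv β x n = (bT β)^[n] x / β ^ n := by
  induction n with
  | zero => simp [bConv]
  | succ m ih =>
    have hβn : (β : ℝ) ^ m ≠ 0 := by positivity
    have hβm : (β : ℝ) ^ (m+1) ≠ 0 := by positivity
    have : bConv β x (m+1) = bConv β x m + (bDigit β x m : ℝ) / β ^ (m + 1) := by
      simp [bConv, Finset.sum_range_succ]
    rw [this]
    have h2 : (bT β)^[m+1] x = β * (bT β)^[m] x - (bDigit β x m : ℝ) := by
      rw [Function.iterate_succ_apply']; rfl
    rw [h2, show x - (bConv β x m + (bDigit β x m : ℝ) / β ^ (m + 1))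
        = (x - bConv β x m) - (bDigit β x m : ℝ) / β ^ (m + 1) by ring, ih]
    field_simp
    ring

theorem stmt1 (β x : ℝ) (hβ : 1 < β) (hx : x ∈ Set.Ico (0:ℝ) 1) (n L : ℕ)
    (hL0 : ∀ j < L, bDigit β x (n + j) = 0) (hL1 : bDigit β x (n + L) ≠ 0) :
    (β ^ (n + L + 1))⁻¹ ≤ x - bConv β x n ∧ x - bConv β x n ≤ (β ^ (n + L))⁻¹ := by
  have hβ0 : (0:ℝ) < β := lt_trans one_pos hβ
  have hiter : ∀ j ≤ L, (bT β)^[n + j] x = β ^ j * (bT β)^[n] x := by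
    intro j hj
    induction j with
    | zero => simp
    | succ m ih =>
      have hm : m ≤ L := Nat.le_of_succ_le hj
      have hz : bDigit β x (n + m) = 0 := hL0 m (Nat.lt_of_succ_le hj)
      have : (bT β)^[n + (m+1)] x = β * (bT β)^[n + m] x - (bDigit β x (n+m) : ℝ) := by
        rw [show n + (m+1) = (n+m) + 1 from rfl, Function.iterate_succ_apply']; rfl
      rw [this, hz, ih hm]
      push_cast
      ring
    
  set y := (bT β)^[n] x with hy
  have hymem := bT_iter_mem β x hx n
  have hLmem := bT_iter_mem β x hx (n + L)
  have hL : (bT β)^[n + L] x = β ^ L * y := hiter L le_rfl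
  have hfl : (1:ℤ) ≤ ⌊β * (bT β)^[n+L] x⌋ := by
    have h0 : (0:ℝ) ≤ β * (bT β)^[n+L] x := mul_nonneg hβ0.le hLmem.1
    have h1 := Int.floor_nonneg.mpr h0
    have hne : ⌊β * (bT β)^[n+L] x⌋ ≠ 0 := hL1
    omega
  have hlow : (1:ℝ) ≤ β * (β ^ L * y) := by
    have := Int.le_floor.mp hfl
    rw [hL] at this
    exact_mod_cast this
  have hup : β ^ L * y < 1 := by rw [← hL]; exact hLmem.2
  rw [bConv_key β x hβ0 n, ← hy]
  constructor
  · rw [le_div_iff₀ (by positivity : (0:ℝ) < β ^ n)]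
    have heq : (β ^ (n + L + 1))⁻¹ * β ^ n = (β ^ (L + 1))⁻¹ := by
      rw [show n + L + 1 = n + (L + 1) from by ring, pow_add, mul_inv]
      field_simp
    rw [heq, inv_eq_one_div, div_le_iff₀ (by positivity : (0:ℝ) < β ^ (L+1)),
      pow_succ]
    nlinarith [hlow]
  · rw [div_le_iff₀ (by positivity : (0:ℝ) < β ^ n)]
    have heq : (β ^ (n + L))⁻¹ * β ^ n = (β ^ L)⁻¹ := by
      rw [pow_add, mul_inv]; field_simp
    rw [heq, inv_eq_one_div, le_div_iff₀ (by positivity : (0:ℝ) < β ^ L)]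
    nlinarith [hup]
end

section
/- Let β > 1 and let x ∈ [0,1) be such that the β-expansion of x is infinite (i.e., ε_n(x) ≠ 0 for infinitely many n). Then liminf_{n→∞} ℓ_n(x)/log_β n = 0, where ℓ_n(x) is the length of the longest run of zeros immediately after the n-th digit. -/
open Filter Real MeasureTheory Set

theorem stmt4 (β x : ℝ) (hβ : 1 < β) (hx : x ∈ Set.Ico (0:ℝ) 1)
    (hinf : ∀ N : ℕ, ∃ n ≥ N, bDigit β x n ≠ 0) :
    Filter.liminf (fun n : ℕ => (ellRun β x n : ℝ) / Real.logb β n) Filter.atTop = 0 := by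
  have hfn : ∀ n, (0:ℝ) ≤ (ellRun β x n : ℝ) / Real.logb β n := by
    intro n
    rcases le_or_gt (Real.logb β n) 0 with h | h
    · rcases eq_or_lt_of_le h with h' | h'
      · simp [h']
      · have : Real.logb β n ≥ 0 := by
          rcases Nat.eq_zero_or_pos n with rfl | hn
          · simp
          · exact Real.logb_nonneg hβ (by exact_mod_cast hn)
        linarith
    · positivity
  have hzero : ∀ n, bDigit β x n ≠ 0 → ellRun β x n = 0 := by
    intro n hn
    have hS : {k : ℕ | ∀ j < k, bDigit β x (n + j) = 0} = {0} := by
      ext k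
      simp only [Set.mem_setOf_eq, Set.mem_singleton_iff]
      constructor
      · intro h
        by_contra hk
        exact hn (by simpa using h 0 (Nat.pos_of_ne_zero hk))
      · rintro rfl; omega
    rw [ellRun, hS, csSup_singleton]
  have hfreq : ∃ᶠ n in atTop, (fun n : ℕ => (ellRun β x n : ℝ) / Real.logb β n) n ≤ 0 := by
    rw [Filter.frequently_atTop]
    intro N
    obtain ⟨n, hn, hd⟩ := hinf N
    exact ⟨n, hn, by simp [hzero n hd]⟩
  have hbdd : Filter.IsBoundedUnder (· ≥ ·) atTop
      (fun n : ℕ => (ellRun β x n : ℝ) / Real.logb β n) :=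
    Filter.isBoundedUnder_of ⟨0, fun n => hfn n⟩
  refine le_antisymm (Filter.liminf_le_of_frequently_le hfreq hbdd) ?_
  refine Filter.le_liminf_of_le ?_ (Filter.Eventually.of_forall hfn)
  exact Filter.IsCoboundedUnder.of_frequently_le hfreq
end

section
/- Let φ : ℕ → (0,∞) be nondecreasing with φ(n) → ∞ and lim_{n→∞} φ(n + ⌊φ(n)⌋)/φ(n) = 1 (interpreting φ(n+φ(n)) via the floor). Then for every positive integer δ, lim_{n→∞} φ(n + δ⌊φ(n)⌋)/φ(n) = 1. -/
open Filter Real MeasureTheory Set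

theorem stmt12 (φ : ℕ → ℝ) (hpos : ∀ n, 0 < φ n) (hmono : Monotone φ)
    (htend : Filter.Tendsto φ Filter.atTop Filter.atTop)
    (h1 : Filter.Tendsto (fun n => φ (n + ⌊φ n⌋₊) / φ n) Filter.atTop (nhds 1))
    (δ : ℕ) (hδ : 0 < δ) :
    Filter.Tendsto (fun n => φ (n + δ * ⌊φ n⌋₊) / φ n) Filter.atTop (nhds 1) := by
  clear hδ
  induction δ with
  | zero =>
    exact tendsto_const_nhds.congr fun n => by
      simp [div_self (hpos n).ne']
  | succ d ih =>
    set m : ℕ → ℕ := fun n => n + d * ⌊φ n⌋₊ with hm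
    have hmtop : Filter.Tendsto m Filter.atTop Filter.atTop :=
      tendsto_atTop_mono (fun n => Nat.le_add_right n _) tendsto_id
    have hcomp : Filter.Tendsto (fun n => φ (m n + ⌊φ (m n)⌋₊) / φ (m n))
        Filter.atTop (nhds 1) := h1.comp hmtop
    have hupper : Filter.Tendsto (fun n => φ (m n + ⌊φ (m n)⌋₊) / φ n)
        Filter.atTop (nhds 1) := by
      have := hcomp.mul ih
      simpa using this.congr fun n => by
        simp only [hm]
        rw [div_mul_div_comm, mul_comm (φ (n + d * ⌊φ n⌋₊ + ⌊φ (n + d * ⌊φ n⌋₊)⌋₊)),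
          mul_div_mul_left _ _ (hpos _).ne']
    refine tendsto_of_tendsto_of_tendsto_of_le_of_le ih hupper (fun n => ?_) (fun n => ?_)
    · refine (div_le_div_iff_of_pos_right (hpos n)).mpr (hmono ?_)
      rw [Nat.succ_mul]; omega
    · refine (div_le_div_iff_of_pos_right (hpos n)).mpr (hmono ?_)
      have hk : ⌊φ n⌋₊ ≤ ⌊φ (n + d * ⌊φ n⌋₊)⌋₊ :=
        Nat.floor_le_floor (hmono (Nat.le_add_right _ _))
      simp only [hm]
      rw [Nat.succ_mul]; omega
end

section
/- Let φ : ℕ → (0,∞) be nondecreasing with φ(n) → ∞ as n → ∞ and lim_{n→∞} φ(n + ⌊φ(n)⌋)/φ(n) = 1. Then liminf_{n→∞} φ(n)/n = 0. -/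
open Filter Real MeasureTheory Set

/-- Auxiliary sequence: iterate `m ↦ m + ⌊φ m⌋₊` starting from `n₀`. -/
noncomputable def seqA (φ : ℕ → ℝ) (n₀ : ℕ) : ℕ → ℕ
  | 0 => n₀
  | k + 1 => seqA φ n₀ k + ⌊φ (seqA φ n₀ k)⌋₊

lemma core13 (φ : ℕ → ℝ) (hpos : ∀ n, 0 < φ n)
    (h1 : Filter.Tendsto (fun n => φ (n + ⌊φ n⌋₊) / φ n) Filter.atTop (nhds 1))
    (c : ℝ) (hc : 0 < c) (hev : ∀ᶠ n in atTop, c ≤ φ n / n) : False := by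
  obtain ⟨N₀, hN₀⟩ := eventually_atTop.mp hev
  have h1' : ∀ᶠ n in atTop, φ (n + ⌊φ n⌋₊) / φ n < 1 + c / 4 :=
    h1.eventually_lt_const (by linarith)
  obtain ⟨N₁, hN₁⟩ := eventually_atTop.mp h1'
  set n₀ : ℕ := max (max N₀ N₁) (⌈2 / c⌉₊ + 1) with hn₀def
  have hn₀N₀ : N₀ ≤ n₀ := le_trans (le_max_left _ _) (le_max_left _ _)
  have hn₀N₁ : N₁ ≤ n₀ := le_trans (le_max_right _ _) (le_max_left _ _)
  have hn₀c : 2 / c ≤ (n₀ : ℝ) := by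
    have : (⌈2 / c⌉₊ : ℝ) ≤ n₀ := by
      exact_mod_cast le_trans (Nat.le_succ _) (le_max_right _ _)
    exact le_trans (Nat.le_ceil _) this
  have hn₀pos : 0 < (n₀ : ℝ) := lt_of_lt_of_le (by positivity) hn₀c
  set a : ℕ → ℕ := seqA φ n₀ with ha
  have ha0 : ∀ k, n₀ ≤ a k := by
    intro k; induction k with
    | zero => exact le_rfl
    | succ k ih => exact le_trans ih (Nat.le_add_right _ _)
  -- lower bound on φ at points ≥ n₀
  have hφlb : ∀ m : ℕ, n₀ ≤ m → c * m ≤ φ m := by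
    intro m hm
    have hmpos : 0 < (m : ℝ) := lt_of_lt_of_le hn₀pos (by exact_mod_cast hm)
    have := hN₀ m (le_trans hn₀N₀ hm)
    calc c * m ≤ φ m / m * m := by nlinarith
    _ = φ m := by field_simp
  have hfloor : ∀ m : ℕ, n₀ ≤ m → (c / 2) * m ≤ (⌊φ m⌋₊ : ℝ) := by
    intro m hm
    have hmge : (n₀ : ℝ) ≤ m := by exact_mod_cast hm
    have h1 : φ m - 1 < (⌊φ m⌋₊ : ℝ) := Nat.sub_one_lt_floor _
    have h2 : c * m ≤ φ m := hφlb m hm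
    have h3 : (1 : ℝ) ≤ c / 2 * m := by
      have : 2 / c ≤ (m : ℝ) := le_trans hn₀c hmge
      rw [div_le_iff₀ hc] at this
      nlinarith
    nlinarith
  have hgrow : ∀ k, (1 + c / 2) ^ k * n₀ ≤ (a k : ℝ) := by
    intro k; induction k with
    | zero => simp [ha, seqA]
    | succ k ih =>
      have hf := hfloor (a k) (ha0 k)
      have hcast : (a (k + 1) : ℝ) = (a k : ℝ) + (⌊φ (a k)⌋₊ : ℝ) := by
        rw [ha]; push_cast [seqA]; ring
      have hb : (0 : ℝ) ≤ (1 + c / 2) ^ k * n₀ := by positivity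
      calc (1 + c / 2) ^ (k + 1) * n₀ = (1 + c / 2) * ((1 + c / 2) ^ k * n₀) := by ring
        _ ≤ (1 + c / 2) * (a k : ℝ) := by nlinarith
        _ = (a k : ℝ) + c / 2 * (a k) := by ring
        _ ≤ (a (k + 1) : ℝ) := by rw [hcast]; linarith
  have hup : ∀ k, φ (a k) ≤ (1 + c / 4) ^ k * φ n₀ := by
    intro k; induction k with
    | zero => simp [ha, seqA]
    | succ k ih =>
      have h := hN₁ (a k) (le_trans hn₀N₁ (ha0 k))
      have hp := hpos (a k)
      have : φ (a k + ⌊φ (a k)⌋₊) < (1 + c / 4) * φ (a k) := by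
        rw [div_lt_iff₀ hp] at h; linarith
      have hstep : a (k + 1) = a k + ⌊φ (a k)⌋₊ := rfl
      rw [hstep]
      calc φ (a k + ⌊φ (a k)⌋₊) ≤ (1 + c / 4) * φ (a k) := this.le
        _ ≤ (1 + c / 4) * ((1 + c / 4) ^ k * φ n₀) := by nlinarith
        _ = (1 + c / 4) ^ (k + 1) * φ n₀ := by ring
  -- combine
  set r : ℝ := (1 + c / 2) / (1 + c / 4) with hr
  have hr1 : 1 < r := by
    rw [hr, lt_div_iff₀ (by linarith)]; linarith
  have hbound : ∀ k, r ^ k ≤ φ n₀ / (c * n₀) := by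
    intro k
    have h4 : (0 : ℝ) < (1 + c / 4) ^ k := by positivity
    have hchain : c * ((1 + c / 2) ^ k * n₀) ≤ (1 + c / 4) ^ k * φ n₀ := by
      have := hφlb (a k) (ha0 k)
      have := hgrow k
      have := hup k
      nlinarith
    rw [hr, div_pow, div_le_div_iff₀ h4 (by positivity)]
    nlinarith
  obtain ⟨k, hk⟩ := ((tendsto_pow_atTop_atTop_of_one_lt hr1).eventually_gt_atTop
    (φ n₀ / (c * n₀))).exists
  exact absurd (hbound k) (not_le.mpr hk)

theorem stmt13 (φ : ℕ → ℝ) (hpos : ∀ n, 0 < φ n) (hmono : Monotone φ)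
    (htend : Filter.Tendsto φ Filter.atTop Filter.atTop)
    (h1 : Filter.Tendsto (fun n => φ (n + ⌊φ n⌋₊) / φ n) Filter.atTop (nhds 1)) :
    Filter.liminf (fun n : ℕ => φ n / n) Filter.atTop = 0 := by
  have key : ∀ c : ℝ, 0 < c → ∃ᶠ n in atTop, φ n / (n : ℝ) < c := by
    intro c hc
    by_contra h
    rw [Filter.not_frequently] at h
    exact core13 φ hpos h1 c hc (h.mono fun n hn => not_lt.mp hn)
  have hnonneg : ∀ n : ℕ, 0 ≤ φ n / (n : ℝ) := fun n =>
    div_nonneg (hpos n).le (Nat.cast_nonneg n)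
  have hb : Filter.IsBoundedUnder (· ≥ ·) atTop fun n : ℕ => φ n / (n : ℝ) :=
    Filter.isBoundedUnder_of ⟨0, fun n => hnonneg n⟩
  have hcob : Filter.IsCoboundedUnder (· ≥ ·) atTop fun n : ℕ => φ n / (n : ℝ) :=
    Filter.IsCoboundedUnder.of_frequently_le ((key 1 one_pos).mono fun n hn => hn.le)
  refine le_antisymm ?_ (Filter.le_liminf_of_le hcob (Eventually.of_forall hnonneg))
  refine le_of_forall_pos_le_add fun ε hε => ?_
  rw [zero_add]
  exact Filter.liminf_le_of_frequently_le ((key ε hε).mono fun n hn => hn.le) hb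
end

section
/- Let β > 1. For Lebesgue-almost every x ∈ [0,1), lim_{n→∞} (1/n) log_β(x − ω_n(x)) = −1, where ω_n(x) = Σ_{k=1}^n ε_k(x)/β^k is the n-th convergent of the β-expansion of x. -/
open Filter Real MeasureTheory Set

namespace Stmt16Aux

lemma bT_eq (β x : ℝ) : bT β x = Int.fract (β * x) := rfl

lemma bT_mem (β x : ℝ) : bT β x ∈ Ico (0:ℝ) 1 := by
  rw [bT_eq]; exact ⟨Int.fract_nonneg _, Int.fract_lt_one _⟩

lemma iter_mem {β x : ℝ} (hx : x ∈ Ico (0:ℝ) 1) (n : ℕ) : (bT β)^[n] x ∈ Ico (0:ℝ) 1 := by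
  cases n with
  | zero => simpa using hx
  | succ n => rw [Function.iterate_succ_apply']; exact bT_mem β _

lemma measurable_bT (β : ℝ) : Measurable (bT β) := by
  have : bT β = fun x => Int.fract (β * x) := rfl
  rw [this]
  exact (measurable_id.const_mul β).fract

lemma conv_eq {β : ℝ} (hβ : 0 < β) (x : ℝ) (n : ℕ) :
    x - bConv β x n = (bT β)^[n] x / β ^ n := by
  induction n with
  | zero => simp [bConv]
  | succ n ih =>
    rw [bConv, Finset.sum_range_succ, ← bConv, Function.iterate_succ_apply']
    have h1 : x - (bConv β x n + (bDigit β x n : ℝ) / β ^ (n+1))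
        = (x - bConv β x n) - (bDigit β x n : ℝ) / β ^ (n+1) := by ring
    rw [h1, ih]
    show (bT β)^[n] x / β ^ n - ((⌊β * (bT β)^[n] x⌋ : ℤ) : ℝ) / β ^ (n+1)
        = (β * (bT β)^[n] x - ⌊β * (bT β)^[n] x⌋) / β ^ (n+1)
    rw [sub_div]
    congr 1
    rw [pow_succ, mul_comm ((β:ℝ)^n) β, mul_div_mul_left _ _ hβ.ne']



noncomputable def uSeq (β : ℝ) : ℕ → ℝ
  | 0 => 1
  | m + 1 => Int.fract (β * uSeq β m)

lemma uSeq_nonneg (β : ℝ) : ∀ m, 0 ≤ uSeq β m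
  | 0 => zero_le_one
  | m + 1 => Int.fract_nonneg _

lemma uSeq_le_one (β : ℝ) : ∀ m, uSeq β m ≤ 1
  | 0 => le_refl 1
  | m + 1 => (Int.fract_lt_one _).le

noncomputable def Hfun (β t : ℝ) : ℝ := ∑' m : ℕ, (β⁻¹) ^ m * min t (uSeq β m)

variable {β : ℝ}

lemma qpos (hβ : 1 < β) : 0 < β⁻¹ := by positivity
lemma qlt (hβ : 1 < β) : β⁻¹ < 1 := inv_lt_one_of_one_lt₀ hβ

lemma summable_aux (hβ : 1 < β) {v : ℕ → ℝ} {C : ℝ} (h0 : ∀ m, 0 ≤ v m) (hC : ∀ m, v m ≤ C) :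
    Summable fun m => (β⁻¹) ^ m * v m := by
  refine Summable.of_nonneg_of_le (fun m => mul_nonneg (pow_nonneg (qpos hβ).le m) (h0 m))
    (fun m => mul_le_mul_of_nonneg_left (hC m) (pow_nonneg (qpos hβ).le m))
    (((summable_geometric_of_lt_one (qpos hβ).le (qlt hβ)).mul_right C))

lemma summable_H (hβ : 1 < β) {t : ℝ} (ht : 0 ≤ t) :
    Summable fun m => (β⁻¹) ^ m * min t (uSeq β m) :=
  summable_aux hβ (fun m => le_min ht (uSeq_nonneg β m)) (fun m => min_le_left _ _)

lemma min_diff_nonneg {a b c : ℝ} (hab : a ≤ b) : 0 ≤ min b c - min a c :=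
  sub_nonneg.mpr (min_le_min hab le_rfl)

lemma min_diff_le {a b c : ℝ} (hab : a ≤ b) : min b c - min a c ≤ b - a := by
  rcases le_total b c with h | h
  · rw [min_eq_left h, min_eq_left (hab.trans h)]
  · rcases le_total a c with h' | h'
    · rw [min_eq_right h, min_eq_left h']; linarith
    · rw [min_eq_right h, min_eq_right h']; linarith

lemma summable_D (hβ : 1 < β) {a b : ℝ} (h0 : 0 ≤ a) (hab : a ≤ b) :
    Summable fun m => (β⁻¹) ^ m * (min b (uSeq β m) - min a (uSeq β m)) :=
  summable_aux hβ (fun m => min_diff_nonneg hab) (fun m => (min_diff_le hab).trans le_rfl)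

lemma H_sub (hβ : 1 < β) {a b : ℝ} (h0 : 0 ≤ a) (hab : a ≤ b) :
    Hfun β b - Hfun β a = ∑' m : ℕ, (β⁻¹) ^ m * (min b (uSeq β m) - min a (uSeq β m)) := by
  rw [Hfun, Hfun, ← Summable.tsum_sub (summable_H hβ (h0.trans hab)) (summable_H hβ h0)]
  congr 1 with m
  ring

lemma le_H_sub (hβ : 1 < β) {a b : ℝ} (h0 : 0 ≤ a) (hab : a ≤ b) (hb1 : b ≤ 1) :
    b - a ≤ Hfun β b - Hfun β a := by
  rw [H_sub hβ h0 hab]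
  rw [Summable.tsum_eq_zero_add (summable_D hβ h0 hab)]
  have h00 : (β⁻¹:ℝ) ^ (0:ℕ) * (min b (uSeq β 0) - min a (uSeq β 0)) = b - a := by
    show (β⁻¹:ℝ) ^ (0:ℕ) * (min b 1 - min a 1) = b - a
    rw [min_eq_left hb1, min_eq_left (hab.trans hb1), pow_zero, one_mul]
  rw [h00]
  have : 0 ≤ ∑' m : ℕ, (β⁻¹) ^ (m+1) * (min b (uSeq β (m+1)) - min a (uSeq β (m+1))) :=
    tsum_nonneg fun m => mul_nonneg (pow_nonneg (qpos hβ).le _) (min_diff_nonneg hab)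
  linarith

lemma H_zero (hβ : 1 < β) : Hfun β 0 = 0 := by
  rw [Hfun]
  have : ∀ m : ℕ, (β⁻¹) ^ m * min 0 (uSeq β m) = 0 := by
    intro m; rw [min_eq_left (uSeq_nonneg β m), mul_zero]
  rw [tsum_congr this, tsum_zero]

lemma H_le (hβ : 1 < β) {t : ℝ} (ht : 0 ≤ t) : Hfun β t ≤ (1 - β⁻¹)⁻¹ * t := by
  rw [Hfun]
  calc ∑' m : ℕ, (β⁻¹) ^ m * min t (uSeq β m) ≤ ∑' m : ℕ, (β⁻¹) ^ m * t := by
        refine Summable.tsum_le_tsum (fun m => mul_le_mul_of_nonneg_left (min_le_left _ _)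
          (pow_nonneg (qpos hβ).le m)) (summable_H hβ ht)
          ((summable_geometric_of_lt_one (qpos hβ).le (qlt hβ)).mul_right t)
    _ = (1 - β⁻¹)⁻¹ * t := by
        rw [tsum_mul_right, tsum_geometric_of_lt_one (qpos hβ).le (qlt hβ)]

-- S1
lemma H_min_eq (hβ : 1 < β) (k : ℕ) {t : ℝ} (ht : 0 ≤ t) :
    Hfun β (min ((k + t) / β) 1) = β⁻¹ * ∑' m : ℕ, (β⁻¹) ^ m * min (k + t) (β * uSeq β m) := by
  have hβ0 : (0:ℝ) < β := lt_trans one_pos hβ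
  rw [Hfun, ← tsum_mul_left]
  refine tsum_congr fun m => ?_
  have h1 : min (min ((k + t) / β) 1) (uSeq β m) = min ((k + t) / β) (uSeq β m) := by
    rw [min_assoc, min_eq_right (uSeq_le_one β m)]
  have h2 : min ((k + t) / β) (uSeq β m) = β⁻¹ * min ((k:ℝ) + t) (β * uSeq β m) := by
    rw [mul_min_of_nonneg _ _ (inv_nonneg.mpr hβ0.le), inv_mul_eq_div,
      inv_mul_cancel_left₀ hβ0.ne']
  rw [h1, h2]; ring

-- S2
lemma count_le {a b c : ℝ} (h0 : 0 ≤ a) (hab : a ≤ b) (hb1 : b ≤ 1) (hc : 0 ≤ c) (K : ℕ) :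
    ∑ k ∈ Finset.range K, (min ((k:ℝ) + b) c - min ((k:ℝ) + a) c)
      ≤ (⌊c⌋₊ : ℝ) * (b - a) + (min b (Int.fract c) - min a (Int.fract c)) := by
  set N := ⌊c⌋₊ with hN
  have hfr : c = (N : ℝ) + Int.fract c := by
    rw [Int.fract]
    have : ((⌊c⌋ : ℤ) : ℝ) = (N : ℝ) := by
      rw [hN, ← Int.natCast_floor_eq_floor hc]; push_cast; ring
    rw [this]; ring
  have tnn : ∀ k : ℕ, 0 ≤ min ((k:ℝ) + b) c - min ((k:ℝ) + a) c :=
    fun k => sub_nonneg.mpr (min_le_min (by linarith) le_rfl)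
  have tzero : ∀ k : ℕ, N + 1 ≤ k → min ((k:ℝ) + b) c - min ((k:ℝ) + a) c = 0 := by
    intro k hk
    have hck : c ≤ (k:ℝ) := by
      have := Nat.lt_floor_add_one c
      have : c < (N:ℝ) + 1 := by exact_mod_cast this
      have : ((N:ℝ) + 1) ≤ (k:ℝ) := by exact_mod_cast hk
      linarith [Nat.lt_floor_add_one c]
    rw [min_eq_right (by linarith), min_eq_right (by linarith)]
    ring
  set M := max K (N + 1) with hM
  calc ∑ k ∈ Finset.range K, (min ((k:ℝ) + b) c - min ((k:ℝ) + a) c)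
      ≤ ∑ k ∈ Finset.range M, (min ((k:ℝ) + b) c - min ((k:ℝ) + a) c) := by
        refine Finset.sum_le_sum_of_subset_of_nonneg
          (Finset.range_subset_range.mpr (le_max_left _ _)) (fun i _ _ => tnn i)
    _ = ∑ k ∈ Finset.range (N + 1), (min ((k:ℝ) + b) c - min ((k:ℝ) + a) c) := by
        refine (Finset.sum_subset (Finset.range_subset_range.mpr (le_max_right _ _)) ?_).symm
        intro k _ hk
        exact tzero k (by simpa using Finset.mem_range.not.mp hk)
    _ = ∑ k ∈ Finset.range N, (min ((k:ℝ) + b) c - min ((k:ℝ) + a) c)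
        + (min ((N:ℝ) + b) c - min ((N:ℝ) + a) c) := Finset.sum_range_succ _ _
    _ ≤ (N : ℝ) * (b - a) + (min b (Int.fract c) - min a (Int.fract c)) := by
        have h1 : ∑ k ∈ Finset.range N, (min ((k:ℝ) + b) c - min ((k:ℝ) + a) c)
            = (N : ℝ) * (b - a) := by
          have he : ∀ k ∈ Finset.range N,
              (min ((k:ℝ) + b) c - min ((k:ℝ) + a) c) = b - a := by
            intro k hk
            have hkN : (k:ℝ) + 1 ≤ (N:ℝ) := by
              exact_mod_cast Nat.succ_le_of_lt (Finset.mem_range.mp hk)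
            have hNc : (N:ℝ) ≤ c := Nat.floor_le hc
            rw [min_eq_left (by linarith), min_eq_left (by linarith)]
            ring
          rw [Finset.sum_congr rfl he, Finset.sum_const, Finset.card_range, nsmul_eq_mul]
        have h2 : min ((N:ℝ) + b) c - min ((N:ℝ) + a) c
            = min b (Int.fract c) - min a (Int.fract c) := by
          conv_lhs => rw [hfr]
          rw [min_add_add_left, min_add_add_left]
          ring
        rw [h1, h2]
lemma floor_cast (hβ : 1 < β) (m : ℕ) :
    ((⌊β * uSeq β m⌋₊ : ℕ) : ℝ) = β * uSeq β m - uSeq β (m + 1) := by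
  have hβ0 : (0:ℝ) < β := lt_trans one_pos hβ
  have hc : 0 ≤ β * uSeq β m := mul_nonneg hβ0.le (uSeq_nonneg β m)
  have : uSeq β (m + 1) = Int.fract (β * uSeq β m) := rfl
  rw [this, Int.fract]
  have hcast : ((⌊β * uSeq β m⌋ : ℤ) : ℝ) = ((⌊β * uSeq β m⌋₊ : ℕ) : ℝ) := by
    rw [← Int.natCast_floor_eq_floor hc]; push_cast; ring
  rw [hcast]; ring

lemma floor_le_beta (hβ : 1 < β) (m : ℕ) : ((⌊β * uSeq β m⌋₊ : ℕ) : ℝ) ≤ β := by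
  have hβ0 : (0:ℝ) < β := lt_trans one_pos hβ
  have hc : 0 ≤ β * uSeq β m := mul_nonneg hβ0.le (uSeq_nonneg β m)
  calc ((⌊β * uSeq β m⌋₊ : ℕ) : ℝ) ≤ β * uSeq β m := Nat.floor_le hc
    _ ≤ β * 1 := by
        exact mul_le_mul_of_nonneg_left (uSeq_le_one β m) hβ0.le
    _ = β := mul_one β

lemma tele (hβ : 1 < β) (N : ℕ) :
    ∑ m ∈ Finset.range N, (β⁻¹) ^ (m + 1) * ((⌊β * uSeq β m⌋₊ : ℕ) : ℝ)
      = 1 - (β⁻¹) ^ N * uSeq β N := by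
  have hβ0 : (0:ℝ) < β := lt_trans one_pos hβ
  have key : ∀ m : ℕ, (β⁻¹) ^ (m + 1) * ((⌊β * uSeq β m⌋₊ : ℕ) : ℝ)
      = (β⁻¹) ^ m * uSeq β m - (β⁻¹) ^ (m + 1) * uSeq β (m + 1) := by
    intro m
    rw [floor_cast hβ m]
    have hq : β⁻¹ * β = 1 := inv_mul_cancel₀ hβ0.ne'
    have : (β⁻¹:ℝ) ^ (m+1) * (β * uSeq β m - uSeq β (m+1))
        = (β⁻¹ * β) * ((β⁻¹) ^ m * uSeq β m) - (β⁻¹) ^ (m+1) * uSeq β (m+1) := by ring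
    rw [this, hq, one_mul]
  rw [Finset.sum_congr rfl (fun m _ => key m), Finset.sum_range_sub']
  simp [uSeq]

lemma E_le_one (hβ : 1 < β) :
    ∑' m : ℕ, (β⁻¹) ^ (m + 1) * ((⌊β * uSeq β m⌋₊ : ℕ) : ℝ) ≤ 1 := by
  have hβ0 : (0:ℝ) < β := lt_trans one_pos hβ
  refine Real.tsum_le_of_sum_range_le (fun m => ?_) (fun N => ?_)
  · positivity
  · rw [tele hβ N]
    have : 0 ≤ (β⁻¹:ℝ) ^ N * uSeq β N :=
      mul_nonneg (pow_nonneg (by positivity) N) (uSeq_nonneg β N)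
    linarith

lemma CI (hβ : 1 < β) {a b : ℝ} (h0 : 0 ≤ a) (hab : a ≤ b) (hb1 : b ≤ 1) :
    ∑ k ∈ Finset.range ⌈β⌉₊,
      (Hfun β (min (((k:ℝ) + b) / β) 1) - Hfun β (min (((k:ℝ) + a) / β) 1))
      ≤ Hfun β b - Hfun β a := by
  have hβ0 : (0:ℝ) < β := lt_trans one_pos hβ
  have hq0 : (0:ℝ) ≤ β⁻¹ := by positivity
  have hb0 : 0 ≤ b := h0.trans hab
  have Sb : ∀ k : ℕ, Summable fun m => (β⁻¹)^m * min ((k:ℝ) + b) (β * uSeq β m) :=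
    fun k => summable_aux hβ
      (fun m => le_min (by positivity) (mul_nonneg hβ0.le (uSeq_nonneg β m)))
      (fun m => min_le_left _ _)
  have Sa : ∀ k : ℕ, Summable fun m => (β⁻¹)^m * min ((k:ℝ) + a) (β * uSeq β m) :=
    fun k => summable_aux hβ
      (fun m => le_min (by positivity) (mul_nonneg hβ0.le (uSeq_nonneg β m)))
      (fun m => min_le_left _ _)
  have Sd : ∀ k : ℕ, Summable fun m => (β⁻¹)^m *
      (min ((k:ℝ) + b) (β * uSeq β m) - min ((k:ℝ) + a) (β * uSeq β m)) := by
    intro k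
    refine summable_aux hβ (C := b - a) (fun m => min_diff_nonneg (by linarith)) (fun m => ?_)
    have := min_diff_le (a := (k:ℝ) + a) (b := (k:ℝ) + b) (c := β * uSeq β m) (by linarith)
    linarith
  have hterm : ∀ k ∈ Finset.range ⌈β⌉₊,
      Hfun β (min (((k:ℝ) + b) / β) 1) - Hfun β (min (((k:ℝ) + a) / β) 1)
      = β⁻¹ * ∑' m : ℕ, (β⁻¹)^m *
          (min ((k:ℝ) + b) (β * uSeq β m) - min ((k:ℝ) + a) (β * uSeq β m)) := by
    intro k _
    rw [H_min_eq hβ k hb0, H_min_eq hβ k h0, ← mul_sub]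
    congr 1
    rw [tsum_congr (fun m => mul_sub ((β⁻¹:ℝ)^m) _ _), Summable.tsum_sub (Sb k) (Sa k)]
  rw [Finset.sum_congr rfl hterm, ← Finset.mul_sum]
  have hswap : ∑ k ∈ Finset.range ⌈β⌉₊, ∑' m : ℕ, (β⁻¹)^m *
      (min ((k:ℝ) + b) (β * uSeq β m) - min ((k:ℝ) + a) (β * uSeq β m))
      = ∑' m : ℕ, ∑ k ∈ Finset.range ⌈β⌉₊, (β⁻¹)^m *
      (min ((k:ℝ) + b) (β * uSeq β m) - min ((k:ℝ) + a) (β * uSeq β m)) :=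
    (Summable.tsum_finsetSum (fun k _ => Sd k)).symm
  rw [hswap]
  have hfac : ∀ m : ℕ, ∑ k ∈ Finset.range ⌈β⌉₊, (β⁻¹)^m *
      (min ((k:ℝ) + b) (β * uSeq β m) - min ((k:ℝ) + a) (β * uSeq β m))
      = (β⁻¹)^m * ∑ k ∈ Finset.range ⌈β⌉₊,
      (min ((k:ℝ) + b) (β * uSeq β m) - min ((k:ℝ) + a) (β * uSeq β m)) :=
    fun m => (Finset.mul_sum _ _ _).symm
  rw [tsum_congr hfac]
  -- now bound the inner sum using count_le
  have hfract : ∀ m : ℕ, Int.fract (β * uSeq β m) = uSeq β (m + 1) := fun m => rfl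
  have hDle : ∀ m : ℕ, ∑ k ∈ Finset.range ⌈β⌉₊,
      (min ((k:ℝ) + b) (β * uSeq β m) - min ((k:ℝ) + a) (β * uSeq β m))
      ≤ ((⌊β * uSeq β m⌋₊ : ℕ) : ℝ) * (b - a)
        + (min b (uSeq β (m+1)) - min a (uSeq β (m+1))) := by
    intro m
    have := count_le h0 hab hb1 (mul_nonneg hβ0.le (uSeq_nonneg β m)) ⌈β⌉₊
    rwa [hfract m] at this
  have SL : Summable fun m : ℕ => (β⁻¹)^m * ∑ k ∈ Finset.range ⌈β⌉₊,
      (min ((k:ℝ) + b) (β * uSeq β m) - min ((k:ℝ) + a) (β * uSeq β m)) := by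
    refine Summable.congr (summable_sum (fun k (_ : k ∈ Finset.range ⌈β⌉₊) => Sd k)) ?_
    intro m
    exact (Finset.mul_sum _ _ _).symm
  have SN : Summable fun m : ℕ => (β⁻¹)^m * (((⌊β * uSeq β m⌋₊ : ℕ) : ℝ) * (b - a)) :=
    summable_aux hβ (fun m => mul_nonneg (Nat.cast_nonneg _) (by linarith))
      (fun m => mul_le_mul_of_nonneg_right (floor_le_beta hβ m) (by linarith))
  have SDel : Summable fun m : ℕ => (β⁻¹)^m *
      (min b (uSeq β (m+1)) - min a (uSeq β (m+1))) :=
    summable_aux hβ (fun m => min_diff_nonneg hab) (fun m => min_diff_le hab)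
  have SR : Summable fun m : ℕ => (β⁻¹)^m * (((⌊β * uSeq β m⌋₊ : ℕ) : ℝ) * (b - a)
      + (min b (uSeq β (m+1)) - min a (uSeq β (m+1)))) := by
    refine Summable.congr (SN.add SDel) ?_
    intro m
    ring
  have step1 : β⁻¹ * ∑' m : ℕ, (β⁻¹)^m * ∑ k ∈ Finset.range ⌈β⌉₊,
      (min ((k:ℝ) + b) (β * uSeq β m) - min ((k:ℝ) + a) (β * uSeq β m))
      ≤ β⁻¹ * ∑' m : ℕ, (β⁻¹)^m * (((⌊β * uSeq β m⌋₊ : ℕ) : ℝ) * (b - a)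
        + (min b (uSeq β (m+1)) - min a (uSeq β (m+1)))) := by
    refine mul_le_mul_of_nonneg_left (Summable.tsum_le_tsum (fun m => ?_) SL SR) hq0
    exact mul_le_mul_of_nonneg_left (hDle m) (pow_nonneg hq0 m)
  refine le_trans step1 ?_
  have hsplit : ∑' m : ℕ, (β⁻¹)^m * (((⌊β * uSeq β m⌋₊ : ℕ) : ℝ) * (b - a)
        + (min b (uSeq β (m+1)) - min a (uSeq β (m+1))))
      = (∑' m : ℕ, (β⁻¹)^m * (((⌊β * uSeq β m⌋₊ : ℕ) : ℝ) * (b - a)))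
        + ∑' m : ℕ, (β⁻¹)^m * (min b (uSeq β (m+1)) - min a (uSeq β (m+1))) := by
    rw [tsum_congr (fun m => mul_add ((β⁻¹:ℝ)^m) _ _), Summable.tsum_add SN SDel]
  rw [hsplit, mul_add]
  -- part 1
  have part1 : β⁻¹ * ∑' m : ℕ, (β⁻¹)^m * (((⌊β * uSeq β m⌋₊ : ℕ) : ℝ) * (b - a))
      ≤ b - a := by
    have e1 : ∀ m : ℕ, (β⁻¹:ℝ)^m * (((⌊β * uSeq β m⌋₊ : ℕ) : ℝ) * (b - a))
        = ((β⁻¹)^m * ((⌊β * uSeq β m⌋₊ : ℕ) : ℝ)) * (b - a) := fun m => by ring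
    rw [tsum_congr e1, tsum_mul_right, ← mul_assoc, ← tsum_mul_left]
    have e2 : ∀ m : ℕ, β⁻¹ * ((β⁻¹:ℝ)^m * ((⌊β * uSeq β m⌋₊ : ℕ) : ℝ))
        = (β⁻¹)^(m+1) * ((⌊β * uSeq β m⌋₊ : ℕ) : ℝ) := fun m => by ring
    rw [tsum_congr e2]
    calc (∑' m : ℕ, (β⁻¹)^(m+1) * ((⌊β * uSeq β m⌋₊ : ℕ) : ℝ)) * (b - a)
        ≤ 1 * (b - a) := mul_le_mul_of_nonneg_right (E_le_one hβ) (by linarith)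
      _ = b - a := one_mul _
  -- part 2
  have part2 : β⁻¹ * ∑' m : ℕ, (β⁻¹)^m * (min b (uSeq β (m+1)) - min a (uSeq β (m+1)))
      = (Hfun β b - Hfun β a) - (b - a) := by
    rw [← tsum_mul_left]
    have e3 : ∀ m : ℕ, β⁻¹ * ((β⁻¹:ℝ)^m * (min b (uSeq β (m+1)) - min a (uSeq β (m+1))))
        = (β⁻¹)^(m+1) * (min b (uSeq β (m+1)) - min a (uSeq β (m+1))) := fun m => by ring
    rw [tsum_congr e3]
    have hg := Summable.tsum_eq_zero_add (summable_D hβ h0 hab)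
    have hg0 : (β⁻¹:ℝ)^(0:ℕ) * (min b (uSeq β 0) - min a (uSeq β 0)) = b - a := by
      show (β⁻¹:ℝ)^(0:ℕ) * (min b 1 - min a 1) = b - a
      rw [min_eq_left hb1, min_eq_left (hab.trans hb1), pow_zero, one_mul]
    rw [H_sub hβ h0 hab, hg, hg0]
    ring
  linarith

lemma div_mono_β (hβ0 : 0 < β) {s t : ℝ} (h : s ≤ t) : s / β ≤ t / β := by
  rw [div_le_div_iff₀ hβ0 hβ0]; nlinarith

lemma branch (hβ : 1 < β) {a b : ℝ} (h0 : 0 ≤ a) (hab : a ≤ b) (hb1 : b ≤ 1) {y : ℝ}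
    (hy : y ∈ Ico (0:ℝ) 1) :
    bT β y ∈ Ico a b ↔ ∃ k ∈ Finset.range ⌈β⌉₊,
      y ∈ Ico (min (((k:ℝ) + a) / β) 1) (min (((k:ℝ) + b) / β) 1) := by
  have hβ0 : (0:ℝ) < β := lt_trans one_pos hβ
  constructor
  · rintro ⟨h1, h2⟩
    have hby : 0 ≤ β * y := mul_nonneg hβ0.le hy.1
    set k := ⌊β * y⌋₊ with hk
    have hfl : ((⌊β * y⌋ : ℤ) : ℝ) = (k : ℝ) := by
      rw [hk, ← Int.natCast_floor_eq_floor hby]; push_cast; ring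
    rw [bT, hfl] at h1 h2
    have hkle : (k : ℝ) ≤ β * y := by
      have := Nat.floor_le hby; rw [← hk] at this; exact this
    refine ⟨k, ?_, ?_, ?_⟩
    · rw [Finset.mem_range, ← Nat.cast_lt (α := ℝ)]
      calc (k:ℝ) ≤ β * y := hkle
        _ < β := by nlinarith [hy.2]
        _ ≤ (⌈β⌉₊ : ℝ) := Nat.le_ceil β
    · have : ((k:ℝ) + a) / β ≤ y := by
        rw [div_le_iff₀ hβ0]; nlinarith
      exact le_trans (min_le_left _ _) this
    · refine lt_min ?_ hy.2
      rw [lt_div_iff₀ hβ0]; nlinarith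
  · rintro ⟨k, hkK, hy1, hy2⟩
    have hkβ : (k : ℝ) < β := by
      have h1 : (k : ℕ) + 1 ≤ ⌈β⌉₊ := Finset.mem_range.mp hkK
      have h2 : ((k:ℝ) + 1) ≤ (⌈β⌉₊ : ℝ) := by exact_mod_cast h1
      have h3 : (⌈β⌉₊ : ℝ) < β + 1 := Nat.ceil_lt_add_one hβ0.le
      linarith
    have hy2' : y < ((k:ℝ) + b) / β := lt_of_lt_of_le hy2 (min_le_left _ _)
    have hylt1 : y < 1 := lt_of_lt_of_le hy2 (min_le_right _ _)
    have hka : ((k:ℝ) + a) / β ≤ 1 := by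
      by_contra hcon
      push_neg at hcon
      have : min (((k:ℝ) + a) / β) 1 = 1 := min_eq_right hcon.le
      rw [this] at hy1
      linarith
    have hy1' : ((k:ℝ) + a) / β ≤ y := by
      rwa [min_eq_left hka] at hy1
    have hb1' : (k:ℝ) + a ≤ β * y := by
      rw [div_le_iff₀ hβ0] at hy1'; linarith [hy1']
    have hb2' : β * y < (k:ℝ) + b := by
      rw [lt_div_iff₀ hβ0] at hy2'; linarith [hy2']
    have hfl : ⌊β * y⌋ = (k : ℤ) := by
      rw [Int.floor_eq_iff]
      constructor
      · push_cast; linarith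
      · push_cast; linarith
    rw [bT, hfl]
    constructor
    · push_cast; linarith
    · push_cast; linarith

lemma key (hβ : 1 < β) : ∀ n : ℕ, ∀ a b : ℝ, 0 ≤ a → a ≤ b → b ≤ 1 →
    volume (Ico (0:ℝ) 1 ∩ (bT β)^[n] ⁻¹' (Ico a b))
      ≤ ENNReal.ofReal (Hfun β b - Hfun β a) := by
  have hβ0 : (0:ℝ) < β := lt_trans one_pos hβ
  intro n
  induction n with
  | zero =>
    intro a b h0 hab hb1
    rw [Function.iterate_zero, Set.preimage_id,
      Set.inter_eq_self_of_subset_right (Set.Ico_subset_Ico h0 hb1), Real.volume_Ico]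
    exact ENNReal.ofReal_le_ofReal (le_H_sub hβ h0 hab hb1)
  | succ n ih =>
    intro a b h0 hab hb1
    have hdecomp : Ico (0:ℝ) 1 ∩ (bT β)^[n+1] ⁻¹' (Ico a b)
        = ⋃ k ∈ Finset.range ⌈β⌉₊, (Ico (0:ℝ) 1 ∩ (bT β)^[n] ⁻¹'
            (Ico (min (((k:ℝ) + a) / β) 1) (min (((k:ℝ) + b) / β) 1))) := by
      ext x
      simp only [Set.mem_inter_iff, Set.mem_preimage, Set.mem_iUnion, exists_prop]
      constructor
      · rintro ⟨hx, hT⟩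
        rw [Function.iterate_succ_apply'] at hT
        obtain ⟨k, hk1, hk2⟩ := (branch hβ h0 hab hb1 (iter_mem hx n)).mp hT
        exact ⟨k, hk1, hx, hk2⟩
      · rintro ⟨k, hk1, hx, hk2⟩
        refine ⟨hx, ?_⟩
        rw [Function.iterate_succ_apply']
        exact (branch hβ h0 hab hb1 (iter_mem hx n)).mpr ⟨k, hk1, hk2⟩
    rw [hdecomp]
    have hmeas : ∀ k : ℕ, MeasurableSet (Ico (0:ℝ) 1 ∩ (bT β)^[n] ⁻¹'
        (Ico (min (((k:ℝ) + a) / β) 1) (min (((k:ℝ) + b) / β) 1))) :=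
      fun k => measurableSet_Ico.inter (((measurable_bT β).iterate n) measurableSet_Ico)
    have hdisj : (↑(Finset.range ⌈β⌉₊) : Set ℕ).PairwiseDisjoint
        (fun k : ℕ => Ico (0:ℝ) 1 ∩ (bT β)^[n] ⁻¹'
          (Ico (min (((k:ℝ) + a) / β) 1) (min (((k:ℝ) + b) / β) 1))) := by
      intro i hi j hj hij
      have hic : ∀ k : ℕ, k ∈ Finset.range ⌈β⌉₊ → (k:ℝ) < β := by
        intro k hk
        have h1 : (k : ℕ) + 1 ≤ ⌈β⌉₊ := Finset.mem_range.mp (by simpa using hk)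
        have h2 : ((k:ℝ) + 1) ≤ (⌈β⌉₊ : ℝ) := by exact_mod_cast h1
        have h3 : (⌈β⌉₊ : ℝ) < β + 1 := Nat.ceil_lt_add_one hβ0.le
        linarith
      have base : ∀ i j : ℕ, i < j → (j:ℝ) < β →
          Disjoint (Ico (min (((i:ℝ) + a) / β) 1) (min (((i:ℝ) + b) / β) 1))
            (Ico (min (((j:ℝ) + a) / β) 1) (min (((j:ℝ) + b) / β) 1)) := by
        intro i j hij hjβ
        rw [Set.Ico_disjoint_Ico]
        have hij' : (i:ℝ) + 1 ≤ (j:ℝ) := by exact_mod_cast hij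
        have h1 : min (((i:ℝ) + b) / β) 1 ≤ min (((j:ℝ) + a) / β) 1 :=
          min_le_min (div_mono_β hβ0 (by linarith)) le_rfl
        calc min (min (((i:ℝ) + b) / β) 1) (min (((j:ℝ) + b) / β) 1)
            ≤ min (((i:ℝ) + b) / β) 1 := min_le_left _ _
          _ ≤ min (((j:ℝ) + a) / β) 1 := h1
          _ ≤ max (min (((i:ℝ) + a) / β) 1) (min (((j:ℝ) + a) / β) 1) := le_max_right _ _
      have hdd : Disjoint (Ico (min (((i:ℝ) + a) / β) 1) (min (((i:ℝ) + b) / β) 1))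
          (Ico (min (((j:ℝ) + a) / β) 1) (min (((j:ℝ) + b) / β) 1)) := by
        rcases lt_or_gt_of_ne hij with h | h
        · exact base i j h (hic j (by simpa using hj))
        · exact (base j i h (hic i (by simpa using hi))).symm
      exact (hdd.preimage _).mono Set.inter_subset_right Set.inter_subset_right
    rw [measure_biUnion_finset hdisj (fun k _ => hmeas k)]
    have hterm : ∀ k ∈ Finset.range ⌈β⌉₊,
        volume (Ico (0:ℝ) 1 ∩ (bT β)^[n] ⁻¹'
          (Ico (min (((k:ℝ) + a) / β) 1) (min (((k:ℝ) + b) / β) 1)))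
        ≤ ENNReal.ofReal (Hfun β (min (((k:ℝ) + b) / β) 1)
            - Hfun β (min (((k:ℝ) + a) / β) 1)) := by
      intro k _
      refine ih _ _ ?_ ?_ ?_
      · exact le_min (by positivity) zero_le_one
      · exact min_le_min (div_mono_β hβ0 (by linarith)) le_rfl
      · exact min_le_right _ _
    calc ∑ k ∈ Finset.range ⌈β⌉₊, volume (Ico (0:ℝ) 1 ∩ (bT β)^[n] ⁻¹'
          (Ico (min (((k:ℝ) + a) / β) 1) (min (((k:ℝ) + b) / β) 1)))
        ≤ ∑ k ∈ Finset.range ⌈β⌉₊, ENNReal.ofReal (Hfun β (min (((k:ℝ) + b) / β) 1)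
            - Hfun β (min (((k:ℝ) + a) / β) 1)) := Finset.sum_le_sum hterm
      _ = ENNReal.ofReal (∑ k ∈ Finset.range ⌈β⌉₊, (Hfun β (min (((k:ℝ) + b) / β) 1)
            - Hfun β (min (((k:ℝ) + a) / β) 1))) := by
          refine (ENNReal.ofReal_sum_of_nonneg ?_).symm
          intro k _
          have hmono : ((k:ℝ) + a) / β ≤ ((k:ℝ) + b) / β := div_mono_β hβ0 (by linarith)
          have h0' : (0:ℝ) ≤ min (((k:ℝ) + a) / β) 1 := le_min (by positivity) zero_le_one
          have hle := le_H_sub hβ h0' (min_le_min hmono le_rfl) (min_le_right _ _)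
          have hge : (0:ℝ) ≤ min (((k:ℝ) + b) / β) 1 - min (((k:ℝ) + a) / β) 1 :=
            sub_nonneg.mpr (min_le_min hmono le_rfl)
          linarith
      _ ≤ ENNReal.ofReal (Hfun β b - Hfun β a) :=
          ENNReal.ofReal_le_ofReal (CI hβ h0 hab hb1)

lemma KL_final (hβ : 1 < β) (n : ℕ) {ε : ℝ} (h0 : 0 ≤ ε) (h1 : ε ≤ 1) :
    volume (Ico (0:ℝ) 1 ∩ (bT β)^[n] ⁻¹' (Ico 0 ε)) ≤ ENNReal.ofReal ((1 - β⁻¹)⁻¹ * ε) := by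
  calc volume (Ico (0:ℝ) 1 ∩ (bT β)^[n] ⁻¹' (Ico 0 ε))
      ≤ ENNReal.ofReal (Hfun β ε - Hfun β 0) := key hβ n 0 ε le_rfl h0 h1
    _ ≤ ENNReal.ofReal ((1 - β⁻¹)⁻¹ * ε) := by
        refine ENNReal.ofReal_le_ofReal ?_
        rw [H_zero hβ]
        simpa using H_le hβ h0

lemma ae_eventually (hβ : 1 < β) {r : ℝ} (hr0 : 0 < r) (hr1 : r < 1) :
    ∀ᵐ x ∂(volume.restrict (Ico (0:ℝ) 1)),
      ∀ᶠ n : ℕ in atTop, r ^ n ≤ (bT β)^[n] x := by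
  set μ := volume.restrict (Ico (0:ℝ) 1) with hμ
  set s : ℕ → Set ℝ := fun n => (bT β)^[n] ⁻¹' (Ico 0 (r ^ n)) with hs
  have hsm : ∀ n, MeasurableSet (s n) :=
    fun n => ((measurable_bT β).iterate n) measurableSet_Ico
  have hsummable : Summable fun n : ℕ => (1 - β⁻¹)⁻¹ * r ^ n :=
    (summable_geometric_of_lt_one hr0.le hr1).mul_left _
  have hsum : (∑' n, μ (s n)) ≠ ⊤ := by
    have hle : ∀ n, μ (s n) ≤ ENNReal.ofReal ((1 - β⁻¹)⁻¹ * r ^ n) := by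
      intro n
      rw [hμ, Measure.restrict_apply (hsm n), Set.inter_comm]
      exact KL_final hβ n (pow_pos hr0 n).le (pow_le_one₀ hr0.le hr1.le)
    have hlt : ∑' n, μ (s n) < ⊤ := by
      calc ∑' n, μ (s n) ≤ ∑' n, ENNReal.ofReal ((1 - β⁻¹)⁻¹ * r ^ n) :=
            ENNReal.tsum_le_tsum hle
        _ = ENNReal.ofReal (∑' n, (1 - β⁻¹)⁻¹ * r ^ n) :=
            (ENNReal.ofReal_tsum_of_nonneg (fun n => mul_nonneg
              (inv_nonneg.mpr (by have := qlt hβ; linarith))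
              (pow_nonneg hr0.le n)) hsummable).symm
        _ < ⊤ := ENNReal.ofReal_lt_top
    exact hlt.ne
  filter_upwards [MeasureTheory.ae_eventually_notMem hsum,
    ae_restrict_mem measurableSet_Ico] with x hx hx01
  filter_upwards [hx] with n hn
  by_contra hcon
  push_neg at hcon
  exact hn ⟨(iter_mem hx01 n).1, hcon⟩

end Stmt16Aux

open Stmt16Aux in
theorem stmt16 (β : ℝ) (hβ : 1 < β) :
    ∀ᵐ x ∂(volume.restrict (Set.Ico (0:ℝ) 1)),
      Filter.Tendsto (fun n : ℕ => Real.logb β (x - bConv β x n) / n)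
        Filter.atTop (nhds (-1)) := by
  have hβ0 : (0:ℝ) < β := lt_trans one_pos hβ
  set r : ℕ → ℝ := fun j => β ^ (-(1:ℝ)/((j:ℝ)+1)) with hrdef
  have hr0 : ∀ j, 0 < r j := fun j => Real.rpow_pos_of_pos hβ0 _
  have hr1 : ∀ j, r j < 1 := by
    intro j
    refine Real.rpow_lt_one_of_one_lt_of_neg hβ ?_
    have : (0:ℝ) < (j:ℝ) + 1 := by positivity
    rw [div_neg_iff]
    right
    constructor <;> [linarith; exact this]
  have hae : ∀ᵐ x ∂(volume.restrict (Set.Ico (0:ℝ) 1)),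
      ∀ j : ℕ, ∀ᶠ n : ℕ in atTop, r j ^ n ≤ (bT β)^[n] x := by
    rw [ae_all_iff]
    intro j
    exact ae_eventually hβ (hr0 j) (hr1 j)
  filter_upwards [hae, ae_restrict_mem measurableSet_Ico] with x hx hx01
  have hlogr : ∀ j : ℕ, ∀ n : ℕ, logb β (r j ^ n) = (n:ℝ) * (-(1:ℝ)/((j:ℝ)+1)) := by
    intro j n
    rw [hrdef]
    rw [← Real.rpow_natCast (β ^ (-(1:ℝ)/((j:ℝ)+1))) n, ← Real.rpow_mul hβ0.le,
      Real.logb_rpow hβ0 hβ.ne']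
    ring
  have hlim0 : Tendsto (fun n : ℕ => logb β ((bT β)^[n] x) / n) atTop (nhds 0) := by
    rw [Metric.tendsto_atTop]
    intro ε hε
    obtain ⟨j, hj⟩ := exists_nat_one_div_lt hε
    obtain ⟨N, hN⟩ := eventually_atTop.mp (hx j)
    refine ⟨max N 1, fun n hn => ?_⟩
    have hn1 : 1 ≤ n := le_trans (le_max_right _ _) hn
    have hnN : N ≤ n := le_trans (le_max_left _ _) hn
    have hnpos : (0:ℝ) < (n:ℝ) := by exact_mod_cast hn1
    have hlow : r j ^ n ≤ (bT β)^[n] x := hN n hnN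
    have hpos : 0 < (bT β)^[n] x := lt_of_lt_of_le (pow_pos (hr0 j) n) hlow
    have hup : (bT β)^[n] x < 1 := (iter_mem hx01 n).2
    have hlogup : logb β ((bT β)^[n] x) ≤ 0 := Real.logb_nonpos hβ hpos.le hup.le
    have hloglow : -((n:ℝ) / ((j:ℝ)+1)) ≤ logb β ((bT β)^[n] x) := by
      have h1 : logb β (r j ^ n) ≤ logb β ((bT β)^[n] x) :=
        Real.logb_le_logb_of_le hβ (pow_pos (hr0 j) n) hlow
      rw [hlogr j n] at h1
      have : (n:ℝ) * (-(1:ℝ)/((j:ℝ)+1)) = -((n:ℝ) / ((j:ℝ)+1)) := by ring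
      linarith [h1, this.symm.le]
    rw [Real.dist_eq, sub_zero]
    have hj1 : (0:ℝ) < (j:ℝ)+1 := by positivity
    have habs : |logb β ((bT β)^[n] x) / n| ≤ 1/((j:ℝ)+1) := by
      rw [abs_of_nonpos (div_nonpos_of_nonpos_of_nonneg hlogup hnpos.le), ← neg_div,
        div_le_div_iff₀ hnpos hj1]
      have h4 : -((n:ℝ)/((j:ℝ)+1)) * ((j:ℝ)+1) = -(n:ℝ) := by field_simp
      nlinarith [mul_le_mul_of_nonneg_right hloglow hj1.le, h4]
    exact lt_of_le_of_lt habs hj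
  have heq : ∀ᶠ n : ℕ in atTop,
      logb β (x - bConv β x n) / n = logb β ((bT β)^[n] x) / n - 1 := by
    obtain ⟨N, hN⟩ := eventually_atTop.mp (hx 0)
    refine eventually_atTop.mpr ⟨max N 1, fun n hn => ?_⟩
    have hn1 : 1 ≤ n := le_trans (le_max_right _ _) hn
    have hnpos : (0:ℝ) < (n:ℝ) := by exact_mod_cast hn1
    have hpos : 0 < (bT β)^[n] x :=
      lt_of_lt_of_le (pow_pos (hr0 0) n) (hN n (le_trans (le_max_left _ _) hn))
    rw [conv_eq hβ0 x n, Real.logb_div hpos.ne' (by positivity : (β:ℝ)^n ≠ 0),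
      Real.logb_pow, Real.logb_self_eq_one hβ, mul_one, sub_div, div_self hnpos.ne']
  have hfin : Tendsto (fun n : ℕ => logb β ((bT β)^[n] x) / n - 1) atTop (nhds (0 - 1)) :=
    hlim0.sub_const 1
  rw [zero_sub] at hfin
  exact Tendsto.congr' (heq.mono fun n h => h.symm) hfin
end
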